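/- arXiv:2406.05548 — 3 statements merged into one kernel-verified Lean document; each statement's English description precedes it below -/
import Mathlib

section
/- For any probability distributions F1, F0 on ℝ that are absolutely continuous with respect to Lebesgue measure and any ζ ∈ [0,1], the rank-ATE satisfies partial additivity: τ_r(F1, ζ·F1 + (1−ζ)·F0) − τ_r(F0, ζ·F1 + (1−ζ)·F0) = τ_r(F1, F0). -/
open MeasureTheory ProbabilityTheory

/-- The rank average treatment effect of two distributions `F1`, `F0` on `ℝ`:
`τ_r(F1, F0) = P(Z1 ≥ Z0) - 1/2` where `Z1 ~ F1`, `Z0 ~ F0` are independent. -/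
noncomputable def rankATE (F1 F0 : Measure ℝ) : ℝ :=
  ((F1.prod F0) {p : ℝ × ℝ | p.2 ≤ p.1}).toReal - 1 / 2

/-!
The rank-ATE is affine in its second argument along mixtures, and it is antisymmetric as soon as
ties `Z1 = Z0` have probability zero, which holds when one of the distributions has no atoms;
in particular `τ_r(F, F) = 0` for atomless `F`. Hence
`τ_r(F1, M) = (1 - ζ) τ_r(F1, F0)` and `τ_r(F0, M) = ζ τ_r(F0, F1) = -ζ τ_r(F1, F0)`
for the mixture `M = ζ F1 + (1 - ζ) F0`, and the difference is `τ_r(F1, F0)`.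
-/

lemma MeasureTheory.Measure.AbsolutelyContinuous.nullSingletonClass {α : Type*}
    [MeasurableSpace α] {μ ν : Measure α} [NullSingletonClass ν] (h : μ ≪ ν) :
    NullSingletonClass μ :=
  ⟨fun x => h (measure_singleton x)⟩

lemma MeasureTheory.Measure.prod_diagonal_eq_zero {α : Type*} [MeasurableSpace α]
    [MeasurableEq α] (μ ν : Measure α) [SFinite ν] [NullSingletonClass ν] :
    μ.prod ν (Set.diagonal α) = 0 := by
  have hsection (x : α) : Prod.mk x ⁻¹' Set.diagonal α = {x} := by
    ext y
    simp [eq_comm]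
  simp [Measure.prod_apply measurableSet_diagonal, hsection]

lemma measure_prod_le_add_measure_prod_le_swap (μ ν : Measure ℝ) [IsProbabilityMeasure μ]
    [IsProbabilityMeasure ν] [NullSingletonClass ν] :
    μ.prod ν {p : ℝ × ℝ | p.2 ≤ p.1} + ν.prod μ {p : ℝ × ℝ | p.2 ≤ p.1} = 1 := by
  have hswap : ν.prod μ {p : ℝ × ℝ | p.2 ≤ p.1} = μ.prod ν {p : ℝ × ℝ | p.1 ≤ p.2} := by
    rw [← Measure.prod_swap, Measure.map_apply measurable_swap
      (measurableSet_le measurable_snd measurable_fst)]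
    rfl
  have hunion : {p : ℝ × ℝ | p.2 ≤ p.1} ∪ {p | p.1 ≤ p.2} = Set.univ := by
    ext p
    simp [le_total p.2 p.1]
  have hinter : {p : ℝ × ℝ | p.2 ≤ p.1} ∩ {p | p.1 ≤ p.2} = Set.diagonal ℝ := by
    ext p
    simp [le_antisymm_iff, and_comm]
  have := measure_union_add_inter (μ := μ.prod ν) {p : ℝ × ℝ | p.2 ≤ p.1}
    (measurableSet_le measurable_fst measurable_snd)
  rwa [hunion, hinter, Measure.prod_diagonal_eq_zero, add_zero, measure_univ, eq_comm,
    ← hswap] at this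

lemma rankATE_swap (μ ν : Measure ℝ) [IsProbabilityMeasure μ] [IsProbabilityMeasure ν]
    [NullSingletonClass ν] :
    rankATE ν μ = -rankATE μ ν := by
  have h := congrArg ENNReal.toReal (measure_prod_le_add_measure_prod_le_swap μ ν)
  rw [ENNReal.toReal_add (measure_ne_top _ _) (measure_ne_top _ _), ENNReal.toReal_one] at h
  unfold rankATE
  linarith

lemma rankATE_self (μ : Measure ℝ) [IsProbabilityMeasure μ] [NullSingletonClass μ] :
    rankATE μ μ = 0 := by
  linarith [rankATE_swap μ μ]

lemma rankATE_mixture_right (μ ν ν' : Measure ℝ) [IsFiniteMeasure μ] [IsFiniteMeasure ν]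
    [IsFiniteMeasure ν'] {ζ : ℝ} (hζ : ζ ∈ Set.Icc (0 : ℝ) 1) :
    rankATE μ (ENNReal.ofReal ζ • ν + ENNReal.ofReal (1 - ζ) • ν')
      = ζ * rankATE μ ν + (1 - ζ) * rankATE μ ν' := by
  unfold rankATE
  rw [Measure.prod_add, Measure.prod_smul_right, Measure.prod_smul_right, Measure.add_apply,
    Measure.smul_apply, Measure.smul_apply, smul_eq_mul, smul_eq_mul,
    ENNReal.toReal_add (by finiteness) (by finiteness), ENNReal.toReal_mul, ENNReal.toReal_mul,
    ENNReal.toReal_ofReal hζ.1, ENNReal.toReal_ofReal (sub_nonneg.2 hζ.2)]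
  ring

/-- Partial additivity of the rank-ATE: for absolutely continuous probability
distributions `F1, F0` on `ℝ` and `ζ ∈ [0, 1]`,
`τ_r(F1, ζ F1 + (1-ζ) F0) - τ_r(F0, ζ F1 + (1-ζ) F0) = τ_r(F1, F0)`. -/
theorem rankATE_partial_additivity
    (F1 F0 : Measure ℝ) [IsProbabilityMeasure F1] [IsProbabilityMeasure F0]
    (h1 : F1 ≪ MeasureTheory.volume) (h0 : F0 ≪ MeasureTheory.volume)
    (ζ : ℝ) (hζ : ζ ∈ Set.Icc (0 : ℝ) 1) :
    rankATE F1 (ENNReal.ofReal ζ • F1 + ENNReal.ofReal (1 - ζ) • F0)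
      - rankATE F0 (ENNReal.ofReal ζ • F1 + ENNReal.ofReal (1 - ζ) • F0)
      = rankATE F1 F0 := by
  have := h1.nullSingletonClass
  have := h0.nullSingletonClass
  rw [rankATE_mixture_right _ _ _ hζ, rankATE_mixture_right _ _ _ hζ, rankATE_self F1,
    rankATE_self F0, rankATE_swap F1 F0]
  ring
end

section
/- Let Z1 = μ1 + ν1 and Z0 = μ0 + ν0, where ν1 and ν0 are independent real random variables, each symmetrically distributed about 0 (not necessarily identically distributed), and let F1, F0 denote the distributions of Z1, Z0. If additionally the distribution of ν1 − ν0 assigns positive probability to every neighborhood of each point where needed to avoid atoms at μ0 − μ1 (e.g., Z1, Z0 are continuously distributed), then τ_r(F1, F0) > 0 if and only if μ1 > μ0; consequently the rank-ATE has the same sign as the mean difference μ1 − μ0. -/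
open MeasureTheory ProbabilityTheory

open Set

/-! The rank-ATE of the two location-shifted laws is `P(ν₁ - ν₀ ≥ μ₀ - μ₁) - 1/2`. The law `ρ`
of `ν₁ - ν₀` is symmetric, being the law of a difference of independent symmetric variables, so
without an atom at `0` it gives mass exactly `1/2` to `[0, ∞)`. Hence `ρ [c, ∞) > 1/2` forces
`c < 0`; conversely for `c < 0` the extra mass `ρ (c, 0)` is positive, since by symmetry it is
half of `ρ (c, -c)`. -/

section Symmetric

variable {ρ : Measure ℝ} [ρ.IsNegInvariant]

theorem measure_Ici_zero_eq_half [IsProbabilityMeasure ρ] (h0 : ρ {0} = 0) :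
    ρ (Ici 0) = 1 / 2 := by
  have hIic : ρ (Iic 0) = ρ (Ici 0) := by
    simpa using ρ.measure_neg (Ici 0)
  have hIoi : ρ (Ioi 0) = ρ (Ici 0) := by
    rw [← Ici_sdiff_left, measure_sdiff_null h0]
  have hsum : ρ (Iic 0) + ρ (Ioi 0) = 1 := by
    rw [← measure_union (Iic_disjoint_Ioi le_rfl) measurableSet_Ioi, Iic_union_Ioi, measure_univ]
  rw [hIic, hIoi, ← two_mul] at hsum
  rw [ENNReal.eq_div_iff two_ne_zero ENNReal.ofNat_ne_top, hsum]

theorem measure_Ioo_neg_zero_pos (h0 : ρ {0} = 0) {ε : ℝ} (hε : 0 < ρ (Ioo (-ε) ε)) :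
    0 < ρ (Ioo (-ε) 0) := by
  refine pos_iff_ne_zero.2 fun hleft => hε.ne' ?_
  have hright : ρ (Ioo 0 ε) = 0 := by
    rw [← ρ.measure_neg, neg_Ioo, neg_zero, hleft]
  have hcover : Ioo (-ε) ε ⊆ Ioo (-ε) 0 ∪ {0} ∪ Ioo 0 ε := by
    intro x hx
    rcases lt_trichotomy x 0 with h | rfl | h
    · exact Or.inl (Or.inl ⟨hx.1, h⟩)
    · exact Or.inl (Or.inr rfl)
    · exact Or.inr ⟨h, hx.2⟩
  exact measure_mono_null hcover (measure_union_null (measure_union_null hleft h0) hright)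

theorem half_lt_measure_Ici_iff [IsProbabilityMeasure ρ] (h0 : ρ {0} = 0)
    (hpos : ∀ ε : ℝ, 0 < ε → 0 < ρ (Ioo (-ε) ε)) {c : ℝ} :
    1 / 2 < ρ (Ici c) ↔ c < 0 := by
  constructor
  · intro h
    by_contra! hc
    exact not_lt.2 ((measure_mono (Ici_subset_Ici.2 hc)).trans_eq (measure_Ici_zero_eq_half h0)) h
  · intro hc
    have hgap : 0 < ρ (Ico c 0) := by
      have := measure_Ioo_neg_zero_pos h0 (hpos (-c) (neg_pos.2 hc))
      rw [neg_neg] at this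
      exact this.trans_le (measure_mono Ioo_subset_Ico_self)
    calc 1 / 2 < 1 / 2 + ρ (Ico c 0) := ENNReal.lt_add_right (by simp) hgap.ne'
      _ = ρ (Ico c 0) + ρ (Ici 0) := by rw [measure_Ici_zero_eq_half h0, add_comm]
      _ = ρ (Ico c 0 ∪ Ici 0) :=
        (measure_union (disjoint_left.2 fun _ hx hx' => not_le.2 hx.2 hx') measurableSet_Ici).symm
      _ = ρ (Ici c) := by rw [Ico_union_Ici_eq_Ici hc.le]

end Symmetric

section Independent

variable {Ω : Type*} [MeasurableSpace Ω] {P : Measure Ω} {X Y : Ω → ℝ}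

theorem isNegInvariant_map_iff (hX : Measurable X) :
    (P.map X).IsNegInvariant ↔ P.map X = P.map (fun ω => -X ω) := by
  rw [show P.map (fun ω => -X ω) = (P.map X).neg from (Measure.map_map measurable_neg hX).symm]
  exact ⟨fun h => h.neg_eq_self.symm, fun h => ⟨h.symm⟩⟩

theorem ProbabilityTheory.IndepFun.isNegInvariant_map_sub [IsFiniteMeasure P] (hX : Measurable X)
    (hY : Measurable Y) (hXY : IndepFun X Y P) [(P.map X).IsNegInvariant]
    [(P.map Y).IsNegInvariant] : (P.map (fun ω => X ω - Y ω)).IsNegInvariant := by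
  have hXsubY : Measurable fun ω => X ω - Y ω := hX.sub hY
  have hXneg : IdentDistrib X (fun ω => -X ω) P P :=
    ⟨hX.aemeasurable, hX.neg.aemeasurable, (isNegInvariant_map_iff hX).1 inferInstance⟩
  have hYneg : IdentDistrib Y (fun ω => -Y ω) P P :=
    ⟨hY.aemeasurable, hY.neg.aemeasurable, (isNegInvariant_map_iff hY).1 inferInstance⟩
  have hpair := hXneg.prodMk hYneg hXY (hXY.comp measurable_neg measurable_neg)
  have hsub : IdentDistrib (fun ω => X ω - Y ω) (fun ω => -X ω - -Y ω) P P :=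
    hpair.comp (u := fun p : ℝ × ℝ => p.1 - p.2) (by fun_prop)
  rw [isNegInvariant_map_iff hXsubY, hsub.map_eq]
  congr with ω
  ring

theorem rankATE_map_eq [IsFiniteMeasure P] (hX : Measurable X) (hY : Measurable Y)
    (hXY : IndepFun X Y P) :
    rankATE (P.map X) (P.map Y) = (P.map (fun ω => X ω - Y ω) (Ici 0)).toReal - 1 / 2 := by
  have hXsubY : Measurable fun ω => X ω - Y ω := hX.sub hY
  rw [rankATE, ← hXY.map_prod_eq_prod_map_map hX.aemeasurable hY.aemeasurable,
    Measure.map_apply (hX.prodMk hY) (measurableSet_le measurable_snd measurable_fst),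
    Measure.map_apply hXsubY measurableSet_Ici]
  congr 3
  ext ω
  simp only [mem_preimage, mem_Ici, sub_nonneg]
  rfl

end Independent

/-- Location-shift model with symmetric noise: `Z1 = μ1 + ν1`, `Z0 = μ0 + ν0` with
`ν1 ⟂ ν0` each symmetrically distributed about `0` (not necessarily identically
distributed).  If the law of `ν1 - ν0` has no atoms and assigns positive probability
to every neighborhood of `0` (as when `Z1, Z0` are continuously distributed with full
support near the relevant point), then `τ_r(F1, F0) > 0 ⟺ μ1 > μ0`; the rank-ATE has
the same sign as the mean difference `μ1 - μ0`. -/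
theorem rankATE_pos_iff_of_symmetric
    {Ω : Type*} [MeasurableSpace Ω] (P : Measure Ω) [IsProbabilityMeasure P]
    (ν1 ν0 : Ω → ℝ) (hm1 : Measurable ν1) (hm0 : Measurable ν0)
    (hindep : IndepFun ν1 ν0 P)
    (hsym1 : P.map ν1 = P.map (fun ω => -ν1 ω))
    (hsym0 : P.map ν0 = P.map (fun ω => -ν0 ω))
    (μ1 μ0 : ℝ)
    (hnoatom : ∀ x : ℝ, P.map (fun ω => ν1 ω - ν0 ω) {x} = 0)
    (hpos : ∀ ε : ℝ, 0 < ε → 0 < P.map (fun ω => ν1 ω - ν0 ω) (Set.Ioo (-ε) ε)) :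
    0 < rankATE (P.map (fun ω => μ1 + ν1 ω)) (P.map (fun ω => μ0 + ν0 ω)) ↔ μ0 < μ1 := by
  have hmD : Measurable fun ω => ν1 ω - ν0 ω := hm1.sub hm0
  have := (isNegInvariant_map_iff hm1).2 hsym1
  have := (isNegInvariant_map_iff hm0).2 hsym0
  have := hindep.isNegInvariant_map_sub hm1 hm0
  have := Measure.isProbabilityMeasure_map (μ := P) hmD.aemeasurable
  have hshift : P.map (fun ω => (μ1 + ν1 ω) - (μ0 + ν0 ω)) (Ici 0)
      = P.map (fun ω => ν1 ω - ν0 ω) (Ici (μ0 - μ1)) := by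
    rw [Measure.map_apply (by fun_prop) measurableSet_Ici,
      Measure.map_apply hmD measurableSet_Ici]
    congr 1
    ext ω
    simp only [mem_preimage, mem_Ici]
    constructor <;> intro h <;> linarith
  rw [rankATE_map_eq (X := fun ω => μ1 + ν1 ω) (Y := fun ω => μ0 + ν0 ω) (by fun_prop)
      (by fun_prop) (hindep.comp (measurable_const_add μ1) (measurable_const_add μ0)), hshift,
    sub_pos, show (1 / 2 : ℝ) = (1 / 2 : ENNReal).toReal by norm_num,
    ENNReal.toReal_lt_toReal (by norm_num) (measure_ne_top _ _),
    half_lt_measure_Ici_iff (hnoatom 0) hpos, sub_neg]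
end

section
/- If the distribution F1 first-order stochastically dominates the distribution F0 (i.e., F1(y) ≤ F0(y) for all y ∈ ℝ), then the rank-ATE is nonnegative: τ_r(F1, F0) ≥ 0. -/
/-!
Replacing `Z0 ~ F0` by an independent copy `Z1' ~ F1` can only decrease `P(Z0 ≤ Z1)`:
conditionally on `Z1 = x` it changes from `F0 (Iic x)` to `F1 (Iic x)`, which is smaller by
stochastic dominance. For two i.i.d. copies, `P(Z1' ≤ Z1) ≥ 1/2` because the events `Z1' ≤ Z1` and
`Z1 ≤ Z1'` cover the whole space and have the same probability by symmetry.
-/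

open MeasureTheory ProbabilityTheory

open Set

lemma measure_Iic_le_of_cdf_le {μ ν : Measure ℝ} [IsProbabilityMeasure μ]
    [IsProbabilityMeasure ν] (h : ∀ x, cdf μ x ≤ cdf ν x) (x : ℝ) :
    μ (Iic x) ≤ ν (Iic x) := by
  rw [← ofReal_cdf, ← ofReal_cdf]
  exact ENNReal.ofReal_le_ofReal (h x)

lemma measurableSet_snd_le_fst : MeasurableSet {p : ℝ × ℝ | p.2 ≤ p.1} :=
  measurableSet_le measurable_snd measurable_fst

lemma prod_snd_le_fst_mono_right (μ : Measure ℝ) {ν ν' : Measure ℝ} [SFinite ν] [SFinite ν']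
    (h : ∀ x, ν (Iic x) ≤ ν' (Iic x)) :
    (μ.prod ν) {p | p.2 ≤ p.1} ≤ (μ.prod ν') {p | p.2 ≤ p.1} := by
  rw [Measure.prod_apply measurableSet_snd_le_fst, Measure.prod_apply measurableSet_snd_le_fst]
  exact lintegral_mono h

lemma measure_univ_le_two_mul_prod_self_snd_le_fst (μ : Measure ℝ) [SFinite μ] :
    (μ.prod μ) univ ≤ 2 * (μ.prod μ) {p | p.2 ≤ p.1} := by
  have h_symm : (μ.prod μ) (Prod.swap ⁻¹' {p | p.2 ≤ p.1}) = (μ.prod μ) {p | p.2 ≤ p.1} :=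
    Measure.measurePreserving_swap.measure_preimage measurableSet_snd_le_fst.nullMeasurableSet
  have h_cover : univ ⊆ {p : ℝ × ℝ | p.2 ≤ p.1} ∪ Prod.swap ⁻¹' {p | p.2 ≤ p.1} :=
    fun p _ => le_total p.2 p.1
  calc (μ.prod μ) univ
      ≤ (μ.prod μ) {p | p.2 ≤ p.1} + (μ.prod μ) (Prod.swap ⁻¹' {p | p.2 ≤ p.1}) :=
        (measure_mono h_cover).trans (measure_union_le _ _)
    _ = 2 * (μ.prod μ) {p | p.2 ≤ p.1} := by rw [h_symm, two_mul]

/-- If `F1` first-order stochastically dominates `F0`, i.e. the CDF of `F1` lies below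
the CDF of `F0` everywhere, then the rank-ATE is nonnegative: `τ_r(F1, F0) ≥ 0`. -/
theorem rankATE_nonneg_of_stochasticDominance
    (F1 F0 : Measure ℝ) [IsProbabilityMeasure F1] [IsProbabilityMeasure F0]
    (hdom : ∀ y : ℝ, cdf F1 y ≤ cdf F0 y) :
    0 ≤ rankATE F1 F0 := by
  have h_self : 1 ≤ 2 * (F1.prod F1) {p | p.2 ≤ p.1} := by
    simpa using measure_univ_le_two_mul_prod_self_snd_le_fst F1
  have h_dom : (F1.prod F1) {p | p.2 ≤ p.1} ≤ (F1.prod F0) {p | p.2 ≤ p.1} :=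
    prod_snd_le_fst_mono_right F1 (measure_Iic_le_of_cdf_le hdom)
  have h_half : (1 : ℝ) ≤ 2 * ((F1.prod F0) {p | p.2 ≤ p.1}).toReal := by
    have h_two : 1 ≤ 2 * (F1.prod F0) {p | p.2 ≤ p.1} := h_self.trans (by gcongr)
    simpa [ENNReal.toReal_mul] using ENNReal.toReal_mono (by finiteness) h_two
  unfold rankATE
  linarith
end
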